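/- Consider the instance where G is the path (v_1, v_2, …, v_{10}) and there are four agents a_1, a_2, a_3, b with binary additive valuations: each of a_1, a_2, a_3 approves exactly the items v_1, v_2, v_3, v_4, v_7, v_8, v_9, v_{10}, and b approves exactly the items v_5, v_6. Then no connected allocation of this instance is both Pareto-optimal and EF1. -/

import Mathlib

/-!
Pareto-optimality forces `b` to hold `v_5`: otherwise `v_5` can be handed to `b`, or `b`'s bundle,
worthless to `b`, can be merged into a neighbouring bundle, unless `b` holds nothing and a single
agent holds `v_5, v_6`, which already violates EF1 for `b`. It also forces `b` to hold neither
`v_4` nor `v_7`: the part of `b`'s bundle beyond `v_5, v_6` can be handed to the neighbouring agent,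
unless it contains all of `v_1, …, v_4` (or `v_7, …, v_10`). EF1 rules that out, since no bundle
may contain four of the eight items approved by the `a_i`: each `a_i` would need three of the
remaining at most four. Finally, with `b`'s bundle separating `v_1, …, v_4` from `v_7, …, v_10`,
the pigeonhole principle gives some `a_i` one of these blocks entirely, again contradicting EF1.
-/

open Finset

/-- A finite set of items is *connected* in the item graph `G` if the induced
subgraph is preconnected (the empty set counts as connected). -/
def ConnSet {V : Type*} (G : SimpleGraph V) (X : Finset V) : Prop :=
  (G.induce (X : Set V)).Preconnected

/-- `π` is a connected allocation of the items in `R` among the agents in `N`. -/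
def IsConnAllocOn {V N : Type*} [DecidableEq V] (G : SimpleGraph V)
    (R : Finset V) (π : N → Finset V) : Prop :=
  (∀ i, π i ⊆ R) ∧ (∀ i, ConnSet G (π i)) ∧
    (∀ i j, i ≠ j → Disjoint (π i) (π j)) ∧ (∀ v ∈ R, ∃ i, v ∈ π i)

/-- `π` is a connected allocation of all items among the agents in `N`. -/
def IsConnAlloc {V N : Type*} [Fintype V] [DecidableEq V] (G : SimpleGraph V)
    (π : N → Finset V) : Prop :=
  IsConnAllocOn G Finset.univ π

/-- `π'` is a Pareto-improvement of `π`. -/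
def ParetoImproves {V N : Type*} (u : N → Finset V → ℝ)
    (π' π : N → Finset V) : Prop :=
  (∀ i, u i (π i) ≤ u i (π' i)) ∧ ∃ i, u i (π i) < u i (π' i)

/-- `π` is Pareto-optimal: no connected allocation Pareto-improves it. -/
def ParetoOptimal {V N : Type*} [Fintype V] [DecidableEq V] (G : SimpleGraph V)
    (u : N → Finset V → ℝ) (π : N → Finset V) : Prop :=
  ∀ π', IsConnAlloc G π' → ¬ ParetoImproves u π' π

/-- `π` satisfies EF1: any envy can be removed by deleting a single item
(keeping the envied bundle connected). -/
def EF1 {V N : Type*} [Fintype V] [DecidableEq V] (G : SimpleGraph V)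
    (u : N → Finset V → ℝ) (π : N → Finset V) : Prop :=
  ∀ i j, u i (π j) ≤ u i (π i) ∨
    ∃ v ∈ π j, ConnSet G ((π j).erase v) ∧ u i ((π j).erase v) ≤ u i (π i)

/-- The maximin fair share of an agent with valuation `u`, when the items are
divided into `|N|` connected bundles. -/
noncomputable def mmsVal {V : Type*} (N : Type*) [Fintype V] [DecidableEq V]
    (G : SimpleGraph V) (u : Finset V → ℝ) : ℝ :=
  sSup {x : ℝ | ∃ P : N → Finset V, IsConnAlloc G P ∧
    x = sInf (Set.range fun j => u (P j))}

/-- `π` is an MMS allocation: every agent gets at least her maximin fair share. -/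
def IsMMS {V N : Type*} [Fintype V] [DecidableEq V] (G : SimpleGraph V)
    (u : N → Finset V → ℝ) (π : N → Finset V) : Prop :=
  ∀ i, mmsVal N G (u i) ≤ u i (π i)

open SimpleGraph

namespace Set.OrdConnected

variable {α : Type*} [LinearOrder α] {s t : Set α} {v w x y : α}

theorem union_of_covBy (hs : s.OrdConnected) (ht : t.OrdConnected) (hx : x ∈ s) (hy : y ∈ t)
    (hxy : x ⋖ y ∨ y ⋖ x) : (s ∪ t).OrdConnected := by
  wlog hcov : x ⋖ y generalizing s t x y
  · rw [Set.union_comm]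
    exact this ht hs hy hx hxy.symm (hxy.resolve_left hcov)
  refine ⟨fun a ha b hb c hc => ?_⟩
  rcases ha with ha | ha <;> rcases hb with hb | hb
  · exact .inl (hs.out ha hb hc)
  · rcases le_or_gt c x with hcx | hxc
    · exact .inl (hs.out ha hx ⟨hc.1, hcx⟩)
    · exact .inr (ht.out hy hb ⟨hcov.ge_of_gt hxc, hc.2⟩)
  · rcases le_or_gt c x with hcx | hxc
    · exact .inr (ht.out ha hy ⟨hc.1, hcx.trans hcov.le⟩)
    · exact .inl (hs.out hx hb ⟨hxc.le, hc.2⟩)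
  · exact .inr (ht.out ha hb hc)

theorem diff_singleton_of_covBy (hs : s.OrdConnected) (hw : w ∉ s) (hvw : v ⋖ w ∨ w ⋖ v) :
    (s \ {v}).OrdConnected := by
  refine ⟨fun a ha b hb c hc => ⟨hs.out ha.1 hb.1 hc, fun hcv => ?_⟩⟩
  obtain rfl : c = v := hcv
  have hac : a < c := hc.1.lt_of_ne fun h => ha.2 h
  have hcb : c < b := hc.2.lt_of_ne fun h => hb.2 h.symm
  rcases hvw with hcw | hwc
  · exact hw (hs.out ha.1 hb.1 ⟨(hac.trans hcw.lt).le, hcw.ge_of_gt hcb⟩)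
  · exact hw (hs.out ha.1 hb.1 ⟨hwc.le_of_lt hac, (hwc.lt.trans hcb).le⟩)

end Set.OrdConnected

namespace Finset

variable {α : Type*} [LinearOrder α] {B : Finset α} {x y : α}

theorem exists_covBy_of_lt_of_mem [IsStronglyCoatomic α] (hB : (B : Set α).OrdConnected)
    (hx : x ∈ B) (hy : y ∉ B) (hyx : y < x) :
    ∃ p ∉ B, ∃ m ∈ B, p ⋖ m ∧ m ≤ x := by
  set m := B.min' ⟨x, hx⟩
  have hym : y < m := lt_of_not_ge fun hmy => hy (hB.out (B.min'_mem _) hx ⟨hmy, hyx.le⟩)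
  obtain ⟨p, -, hpm⟩ := exists_le_covBy_of_lt hym
  exact ⟨p, fun hp => (B.min'_le p hp).not_gt hpm.lt, m, B.min'_mem _, hpm, B.min'_le x hx⟩

theorem exists_covBy_of_mem_of_lt [IsStronglyAtomic α] (hB : (B : Set α).OrdConnected)
    (hx : x ∈ B) (hy : y ∉ B) (hxy : x < y) :
    ∃ q ∉ B, ∃ M ∈ B, M ⋖ q ∧ x ≤ M := by
  set M := B.max' ⟨x, hx⟩
  have hMy : M < y := lt_of_not_ge fun hyM => hy (hB.out hx (B.max'_mem _) ⟨hxy.le, hyM⟩)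
  obtain ⟨q, hMq, -⟩ := exists_covBy_le_of_lt hMy
  exact ⟨q, fun hq => (B.le_max' q hq).not_gt hMq.lt, M, B.max'_mem _, hMq, B.le_max' x hx⟩

end Finset

section Hasse

variable {α : Type*} [LinearOrder α] [SuccOrder α] [IsSuccArchimedean α]

theorem connSet_hasse_iff {X : Finset α} : ConnSet (hasse α) X ↔ (X : Set α).OrdConnected := by
  constructor
  · refine fun h => ⟨fun a ha b hb c hc => by_contra fun hcX => ?_⟩
    obtain ⟨p⟩ := h ⟨a, ha⟩ ⟨b, hb⟩
    obtain ⟨d, -, hd₁, hd₂⟩ := p.exists_boundary_dart {z | (z : α) < c}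
      (hc.1.lt_of_ne fun h => hcX (h ▸ ha)) (not_lt.mpr hc.2)
    rcases d.adj with hcov | hcov
    · obtain rfl : (d.snd : α) = c := le_antisymm (hcov.ge_of_gt hd₁) (not_lt.mp hd₂)
      exact hcX d.snd.2
    · exact hd₂ (hcov.lt.trans hd₁)
  · rintro h ⟨a, ha⟩ ⟨b, hb⟩
    wlog hab : a ≤ b generalizing a b
    · exact (this b hb a ha (le_of_not_ge hab)).symm
    suffices ∀ n, a ≤ n → n ≤ b →
        ∃ hn : n ∈ X, ((hasse α).induce (X : Set α)).Reachable ⟨a, ha⟩ ⟨n, hn⟩ from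
      (this b hab le_rfl).2
    intro n han
    induction han using Succ.rec with
    | rfl => exact fun _ => ⟨ha, .rfl⟩
    | succ n han ih =>
      intro hnb
      by_cases hn : IsMax n
      · rw [hn.succ_eq]; exact ih (hn.succ_eq ▸ hnb)
      obtain ⟨hnX, hreach⟩ := ih ((Order.le_succ n).trans hnb)
      have hsX : Order.succ n ∈ X := h.out ha hb ⟨han.trans (Order.le_succ n), hnb⟩
      exact ⟨hsX, hreach.trans (Adj.reachable (.inl (Order.covBy_succ_of_not_isMax hn)))⟩

end Hasse

theorem connSet_pathGraph_iff {n : ℕ} {X : Finset (Fin n)} :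
    ConnSet (pathGraph n) X ↔ (X : Set (Fin n)).OrdConnected :=
  connSet_hasse_iff

section Allocation

variable {V N : Type*} [Fintype V] [DecidableEq V] {G : SimpleGraph V} {π : N → Finset V}

theorem EF1.card_inter_le {A : N → Finset V} (h : EF1 G (fun k X => (#(X ∩ A k) : ℝ)) π)
    (i j : N) : #(π j ∩ A i) ≤ #(π i ∩ A i) + 1 := by
  rcases h i j with h | ⟨v, -, -, h⟩ <;> beta_reduce at h
  · have : #(π j ∩ A i) ≤ #(π i ∩ A i) := by exact_mod_cast h
    omega
  · have : #((π j ∩ A i).erase v) ≤ #(π i ∩ A i) := by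
      rw [← erase_inter]
      exact_mod_cast h
    have := pred_card_le_card_erase (s := π j ∩ A i) (a := v)
    omega

theorem IsConnAlloc.sum_card_inter [Fintype N] (hπ : IsConnAlloc G π) (T : Finset V) :
    ∑ k, #(π k ∩ T) = #T := by
  obtain ⟨-, -, hdisj, hcover⟩ := hπ
  rw [← card_biUnion fun k _ l _ hkl => (hdisj k l hkl).mono inter_subset_left inter_subset_left]
  congr 1
  ext v
  simp only [mem_biUnion, mem_univ, mem_inter, true_and]
  exact ⟨fun ⟨_, _, hv⟩ => hv,
    fun hv => (hcover v (mem_univ v)).imp fun _ hk => ⟨hk, hv⟩⟩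

variable [DecidableEq N]

def reassign (π : N → Finset V) (S : Finset V) (j : N) : N → Finset V :=
  fun k => if k = j then π j ∪ S else π k \ S

theorem IsConnAlloc.reassign (hπ : IsConnAlloc G π) {S : Finset V} {i j : N} (hS : S ⊆ π i)
    (hi : ConnSet G (π i \ S)) (hj : ConnSet G (π j ∪ S)) :
    IsConnAlloc G (reassign π S j) := by
  obtain ⟨-, hconn, hdisj, hcover⟩ := hπ
  refine ⟨fun _ => subset_univ _, fun k => ?_, fun k l hkl => ?_, fun v _ => ?_⟩
  · unfold _root_.reassign
    split_ifs with hkj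
    · exact hj
    obtain rfl | hki := eq_or_ne k i
    · exact hi
    · rw [sdiff_eq_self_of_disjoint ((hdisj k i hki).mono_right hS)]
      exact hconn k
  · unfold _root_.reassign
    split_ifs with hk hl hl
    · exact absurd (hk.trans hl.symm) hkl
    · subst hk
      exact disjoint_union_left.mpr ⟨(hdisj _ _ hkl).mono_right sdiff_subset, disjoint_sdiff⟩
    · subst hl
      exact disjoint_union_right.mpr ⟨(hdisj _ _ hkl).mono_left sdiff_subset, sdiff_disjoint⟩
    · exact (hdisj k l hkl).mono sdiff_subset sdiff_subset
  · by_cases hvS : v ∈ S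
    · exact ⟨j, by simp [_root_.reassign, hvS]⟩
    obtain ⟨k, hk⟩ := hcover v (mem_univ v)
    refine ⟨k, ?_⟩
    unfold _root_.reassign
    split_ifs with hkj
    · exact mem_union_left _ (hkj ▸ hk)
    · exact mem_sdiff.mpr ⟨hk, hvS⟩

theorem not_paretoOptimal_of_reassign {A : N → Finset V} (hπ : IsConnAlloc G π) {S : Finset V}
    {i j : N} (hij : i ≠ j) (hS : S ⊆ π i) (hi : ConnSet G (π i \ S))
    (hj : ConnSet G (π j ∪ S)) (hSA : Disjoint S (A i)) {v : V} (hv : v ∈ S)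
    (hvA : v ∈ A j) :
    ¬ ParetoOptimal G (fun k X => (#(X ∩ A k) : ℝ)) π := by
  intro hPO
  have hdisj := hπ.2.2.1
  refine hPO _ (hπ.reassign hS hi hj) ⟨fun k => ?_, j, ?_⟩
  · dsimp only [reassign]
    split_ifs with hkj
    · subst hkj
      gcongr
      exact subset_union_left
    · refine Nat.cast_le.mpr (card_le_card fun x hx => ?_)
      obtain ⟨hxk, hxA⟩ := mem_inter.mp hx
      refine mem_inter.mpr ⟨mem_sdiff.mpr ⟨hxk, fun hxS => ?_⟩, hxA⟩
      obtain rfl : k = i := by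
        by_contra hki
        exact disjoint_left.mp (hdisj k i hki) hxk (hS hxS)
      exact disjoint_left.mp hSA hxS hxA
  · simp only [reassign, if_pos]
    have hvj : v ∉ π j := disjoint_left.mp (hdisj i j hij) (hS hv)
    refine Nat.cast_lt.mpr (card_lt_card ((ssubset_iff_of_subset ?_).mpr ?_))
    · exact inter_subset_inter_right subset_union_left
    · exact ⟨v, mem_inter.mpr ⟨mem_union_right _ hv, hvA⟩, fun h => hvj (mem_inter.mp h).1⟩

end Allocation

theorem IsConnAlloc.ordConnected_pathGraph {n : ℕ} {N : Type*} {π : N → Finset (Fin n)}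
    (hπ : IsConnAlloc (pathGraph n) π) (k : N) : (π k : Set (Fin n)).OrdConnected :=
  connSet_pathGraph_iff.mp (hπ.2.1 k)

def approvedByA : Finset (Fin 10) := {0, 1, 2, 3, 6, 7, 8, 9}

def approvedByB : Finset (Fin 10) := {4, 5}

/-- Item `v_k` of the path is `k - 1 : Fin 10`; the agents `a_1, a_2, a_3` are `Sum.inl` and `b` is
`Sum.inr ()`. -/
def approvals : Fin 3 ⊕ Unit → Finset (Fin 10) :=
  Sum.elim (fun _ => approvedByA) (fun _ => approvedByB)

abbrev utility (k : Fin 3 ⊕ Unit) (X : Finset (Fin 10)) : ℝ := #(X ∩ approvals k)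

theorem mem_approvedByA_iff {v : Fin 10} : v ∈ approvedByA ↔ v ∉ approvedByB := by
  revert v; decide

section Instance

variable {π : Fin 3 ⊕ Unit → Finset (Fin 10)}

theorem exists_inl_mem (hπ : IsConnAlloc (pathGraph 10) π) {v : Fin 10}
    (hv : v ∉ π (.inr ())) : ∃ t, v ∈ π (.inl t) := by
  obtain ⟨t | ⟨⟩, hk⟩ := hπ.2.2.2 v (mem_univ v)
  exacts [⟨t, hk⟩, absurd hk hv]

theorem card_inter_approvedByA_lt_four (hπ : IsConnAlloc (pathGraph 10) π)
    (hEF1 : EF1 (pathGraph 10) utility π) (k : Fin 3 ⊕ Unit) :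
    #(π k ∩ approvedByA) < 4 := by
  -- If some bundle held four of the eight items of `approvedByA`, EF1 would give each `a_t` three.
  have hsum := hπ.sum_card_inter approvedByA
  simp only [Fintype.sum_sum_type, Fin.sum_univ_three, univ_unique, sum_singleton] at hsum
  have hcard : #approvedByA = 8 := rfl
  have hEF : ∀ t, #(π k ∩ approvedByA) ≤ #(π (.inl t) ∩ approvedByA) + 1 :=
    fun t => hEF1.card_inter_le (.inl t) k
  have := hEF 0
  have := hEF 1
  have := hEF 2
  rcases k with j | ⟨⟩
  · fin_cases j <;> omega
  · omega

theorem card_Icc_inter_approvedByA_lt_four (hπ : IsConnAlloc (pathGraph 10) π)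
    (hEF1 : EF1 (pathGraph 10) utility π) {k : Fin 3 ⊕ Unit} {x y : Fin 10} (hx : x ∈ π k)
    (hy : y ∈ π k) : #(Icc x y ∩ approvedByA) < 4 := by
  have hsub : Icc x y ⊆ π k := fun z hz =>
    (hπ.ordConnected_pathGraph k).out hx hy (by simpa using hz)
  exact (card_le_card (inter_subset_inter hsub subset_rfl)).trans_lt
    (card_inter_approvedByA_lt_four hπ hEF1 k)

theorem not_paretoOptimal_of_adjacent_approved (hπ : IsConnAlloc (pathGraph 10) π) {x y : Fin 10}
    (hx : x ∈ π (.inr ())) (hy : y ∉ π (.inr ())) (hyB : y ∈ approvedByB)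
    (hxy : x ⋖ y ∨ y ⋖ x) : ¬ ParetoOptimal (pathGraph 10) utility π := by
  obtain ⟨t, ht⟩ := exists_inl_mem hπ hy
  have hxt : x ∉ π (.inl t) := disjoint_right.mp (hπ.2.2.1 _ _ Sum.inl_ne_inr) hx
  refine not_paretoOptimal_of_reassign hπ (j := .inr ()) Sum.inl_ne_inr
    (singleton_subset_iff.mpr ht) ?_ ?_
    (disjoint_singleton_left.mpr fun h => mem_approvedByA_iff.mp h hyB)
    (mem_singleton_self y) hyB
  · rw [connSet_pathGraph_iff, coe_sdiff, coe_singleton]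
    exact (hπ.ordConnected_pathGraph _).diff_singleton_of_covBy hxt hxy.symm
  · rw [connSet_pathGraph_iff, coe_union, coe_singleton]
    exact (hπ.ordConnected_pathGraph _).union_of_covBy Set.ordConnected_singleton hx rfl hxy

theorem not_paretoOptimal_of_unapproved_segment (hπ : IsConnAlloc (pathGraph 10) π)
    {S : Finset (Fin 10)} (hSB : S ⊆ π (.inr ())) (hS : (S : Set (Fin 10)).OrdConnected)
    (hBS : ((π (.inr ()) \ S : Finset (Fin 10)) : Set (Fin 10)).OrdConnected)
    (hSA : Disjoint S approvedByB) {p m : Fin 10} (hp : p ∉ π (.inr ())) (hm : m ∈ S)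
    (hpm : p ⋖ m ∨ m ⋖ p) : ¬ ParetoOptimal (pathGraph 10) utility π := by
  obtain ⟨t, ht⟩ := exists_inl_mem hπ hp
  refine not_paretoOptimal_of_reassign hπ (j := .inl t) Sum.inr_ne_inl hSB
    (connSet_pathGraph_iff.mpr hBS) ?_ hSA hm (mem_approvedByA_iff.mpr (disjoint_left.mp hSA hm))
  rw [connSet_pathGraph_iff, coe_union]
  exact (hπ.ordConnected_pathGraph _).union_of_covBy hS ht hm hpm

theorem not_paretoOptimal_of_unapproved_bundle (hπ : IsConnAlloc (pathGraph 10) π)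
    (hne : (π (.inr ())).Nonempty) (hB : Disjoint (π (.inr ())) approvedByB) :
    ¬ ParetoOptimal (pathGraph 10) utility π := by
  obtain ⟨x, hx⟩ := hne
  have h4 : 4 ∉ π (.inr ()) := disjoint_right.mp hB (by decide)
  obtain ⟨p, hp, m, hm, hpm⟩ :
      ∃ p ∉ π (.inr ()), ∃ m ∈ π (.inr ()), p ⋖ m ∨ m ⋖ p := by
    rcases lt_or_gt_of_ne (ne_of_mem_of_not_mem hx h4) with hx4 | hx4
    · obtain ⟨p, hp, m, hm, hmp, -⟩ :=
        exists_covBy_of_mem_of_lt (hπ.ordConnected_pathGraph _) hx h4 hx4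
      exact ⟨p, hp, m, hm, .inr hmp⟩
    · obtain ⟨p, hp, m, hm, hpm, -⟩ :=
        exists_covBy_of_lt_of_mem (hπ.ordConnected_pathGraph _) hx h4 hx4
      exact ⟨p, hp, m, hm, .inl hpm⟩
  refine not_paretoOptimal_of_unapproved_segment hπ subset_rfl (hπ.ordConnected_pathGraph _) ?_
    hB hp hm hpm
  rw [Finset.sdiff_self, coe_empty]
  exact Set.ordConnected_empty

theorem four_mem_of_paretoOptimal_of_ef1 (hπ : IsConnAlloc (pathGraph 10) π)
    (hPO : ParetoOptimal (pathGraph 10) utility π) (hEF1 : EF1 (pathGraph 10) utility π) :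
    4 ∈ π (.inr ()) := by
  have h45 : (4 : Fin 10) ⋖ 5 := by simp [Fin.covBy_iff, Order.covBy_iff_add_one_eq]
  by_contra h4
  by_cases h5 : 5 ∈ π (.inr ())
  · exact not_paretoOptimal_of_adjacent_approved hπ h5 h4 (by decide) (.inr h45) hPO
  rcases (π (.inr ())).eq_empty_or_nonempty with hempty | hne
  · obtain ⟨t, ht⟩ := exists_inl_mem hπ h4
    by_cases h5t : 5 ∈ π (.inl t)
    · have hsub : approvedByB ⊆ π (.inl t) ∩ approvedByB :=
        subset_inter (by simp [approvedByB, insert_subset_iff, ht, h5t]) subset_rfl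
      have := card_le_card hsub
      have := hEF1.card_inter_le (.inr ()) (.inl t)
      simp only [approvals, Sum.elim_inr, hempty, empty_inter, card_empty] at this
      have : #approvedByB = 2 := rfl
      omega
    refine not_paretoOptimal_of_reassign hπ (A := approvals) (j := .inr ()) Sum.inl_ne_inr
      (singleton_subset_iff.mpr ht) ?_ ?_
      (disjoint_singleton_left.mpr (by decide : 4 ∉ approvedByA))
      (mem_singleton_self 4) (by decide) hPO
    · rw [connSet_pathGraph_iff, coe_sdiff, coe_singleton]
      exact (hπ.ordConnected_pathGraph _).diff_singleton_of_covBy h5t (.inl h45)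
    · rw [connSet_pathGraph_iff, hempty, empty_union, coe_singleton]
      exact Set.ordConnected_singleton
  · exact not_paretoOptimal_of_unapproved_bundle hπ hne
      (by simp [approvedByB, disjoint_insert_right, h4, h5]) hPO

theorem three_notMem_of_paretoOptimal_of_ef1 (hπ : IsConnAlloc (pathGraph 10) π)
    (hPO : ParetoOptimal (pathGraph 10) utility π) (hEF1 : EF1 (pathGraph 10) utility π) :
    3 ∉ π (.inr ()) := by
  intro h3
  by_cases h0 : 0 ∈ π (.inr ())
  · exact absurd (card_Icc_inter_approvedByA_lt_four hπ hEF1 h0 h3) (by decide)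
  have hB := hπ.ordConnected_pathGraph (.inr ())
  obtain ⟨p, hp, m, hm, hpm, hm3⟩ := exists_covBy_of_lt_of_mem hB h3 h0 (by decide)
  refine not_paretoOptimal_of_unapproved_segment hπ (S := π (.inr ()) ∩ Iic 3)
    inter_subset_left ?_ ?_
    ((by decide : Disjoint (Iic (3 : Fin 10)) approvedByB).mono_left inter_subset_right) hp
    (mem_inter.mpr ⟨hm, mem_Iic.mpr hm3⟩) (.inl hpm) hPO
  · rw [coe_inter, coe_Iic]
    exact hB.inter Set.ordConnected_Iic
  · rw [sdiff_inter_self_left, coe_sdiff, coe_Iic, Set.sdiff_eq, Set.compl_Iic]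
    exact hB.inter Set.ordConnected_Ioi

theorem six_notMem_of_paretoOptimal_of_ef1 (hπ : IsConnAlloc (pathGraph 10) π)
    (hPO : ParetoOptimal (pathGraph 10) utility π) (hEF1 : EF1 (pathGraph 10) utility π) :
    6 ∉ π (.inr ()) := by
  intro h6
  by_cases h9 : 9 ∈ π (.inr ())
  · exact absurd (card_Icc_inter_approvedByA_lt_four hπ hEF1 h6 h9) (by decide)
  have hB := hπ.ordConnected_pathGraph (.inr ())
  obtain ⟨q, hq, M, hM, hMq, hM6⟩ := exists_covBy_of_mem_of_lt hB h6 h9 (by decide)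
  refine not_paretoOptimal_of_unapproved_segment hπ (S := π (.inr ()) ∩ Ici 6)
    inter_subset_left ?_ ?_
    ((by decide : Disjoint (Ici (6 : Fin 10)) approvedByB).mono_left inter_subset_right) hq
    (mem_inter.mpr ⟨hM, mem_Ici.mpr hM6⟩) (.inr hMq) hPO
  · rw [coe_inter, coe_Ici]
    exact hB.inter Set.ordConnected_Ici
  · rw [sdiff_inter_self_left, coe_sdiff, coe_Ici, Set.sdiff_eq, Set.compl_Ici]
    exact hB.inter Set.ordConnected_Iio

theorem not_ef1_of_four_mem (hπ : IsConnAlloc (pathGraph 10) π) (h4 : 4 ∈ π (.inr ()))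
    (h3 : 3 ∉ π (.inr ())) (h6 : 6 ∉ π (.inr ())) : ¬ EF1 (pathGraph 10) utility π := by
  intro hEF1
  have hconn := hπ.ordConnected_pathGraph
  have h0 : 0 ∉ π (.inr ()) := fun h0 => h3 ((hconn _).out h0 h4 ⟨by decide, by decide⟩)
  have h9 : 9 ∉ π (.inr ()) := fun h9 => h6 ((hconn _).out h4 h9 ⟨by decide, by decide⟩)
  have apart : ∀ {s t : Fin 3} {x y : Fin 10},
      x ∈ π (.inl s) → y ∈ π (.inl t) → x ≤ 4 → 4 ≤ y → s ≠ t := by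
    rintro s t x y hx hy hx4 h4y rfl
    exact disjoint_left.mp (hπ.2.2.1 _ _ Sum.inl_ne_inr) ((hconn _).out hx hy ⟨hx4, h4y⟩) h4
  obtain ⟨t₀, ht₀⟩ := exists_inl_mem hπ h0
  obtain ⟨t₃, ht₃⟩ := exists_inl_mem hπ h3
  obtain ⟨t₆, ht₆⟩ := exists_inl_mem hπ h6
  obtain ⟨t₉, ht₉⟩ := exists_inl_mem hπ h9
  have pigeonhole :
      ∀ a b c d : Fin 3, a ≠ c → a ≠ d → b ≠ c → b ≠ d → a = b ∨ c = d := by decide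
  rcases pigeonhole t₀ t₃ t₆ t₉ (apart ht₀ ht₆ (by decide) (by decide))
      (apart ht₀ ht₉ (by decide) (by decide)) (apart ht₃ ht₆ (by decide) (by decide))
      (apart ht₃ ht₉ (by decide) (by decide)) with rfl | rfl
  · exact absurd (card_Icc_inter_approvedByA_lt_four hπ hEF1 ht₀ ht₃) (by decide)
  · exact absurd (card_Icc_inter_approvedByA_lt_four hπ hEF1 ht₆ ht₉) (by decide)

end Instance

/-- On the path `(v_1,…,v_10)` (encoded as `Fin 10`), with agents
`a_1,a_2,a_3` (`Sum.inl`) approving `v_1,v_2,v_3,v_4,v_7,v_8,v_9,v_10` and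
agent `b` (`Sum.inr`) approving `v_5,v_6`, no connected allocation is both
Pareto-optimal and EF1. -/
theorem stmt8
    (A : (Fin 3 ⊕ Unit) → Finset (Fin 10))
    (hA1 : ∀ t, A (Sum.inl t) = ({0, 1, 2, 3, 6, 7, 8, 9} : Finset (Fin 10)))
    (hA2 : A (Sum.inr ()) = ({4, 5} : Finset (Fin 10)))
    (u : (Fin 3 ⊕ Unit) → Finset (Fin 10) → ℝ)
    (hu : ∀ i X, u i X = ((X ∩ A i).card : ℝ))
    (π : (Fin 3 ⊕ Unit) → Finset (Fin 10))
    (hπ : IsConnAlloc (SimpleGraph.pathGraph 10) π) :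
    ¬ (ParetoOptimal (SimpleGraph.pathGraph 10) u π ∧
       EF1 (SimpleGraph.pathGraph 10) u π) := by
  obtain rfl : A = approvals := funext fun | .inl t => hA1 t | .inr () => hA2
  obtain rfl : u = utility := funext fun i => funext (hu i)
  rintro ⟨hPO, hEF1⟩
  exact not_ef1_of_four_mem hπ (four_mem_of_paretoOptimal_of_ef1 hπ hPO hEF1)
    (three_notMem_of_paretoOptimal_of_ef1 hπ hPO hEF1)
    (six_notMem_of_paretoOptimal_of_ef1 hπ hPO hEF1) hEF1
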